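/- arXiv:2512.22623 — 4 statements merged into one kernel-verified Lean document; each statement's English description precedes it below -/
import Mathlib

section
/- CAFe error recursion: under L-smoothness and bounded dissimilarity (constant B²), the CAFe rescaled average error satisfies E||ē^{k+1}||² ≤ ω E[B²||∇f(x^{k+1})||² - ||∇f(x^k)||²] + 2γωL E||g^k||² + ω E||ē^k||², where g^k = ∇f(x^k) - ē^k and x^{k+1} = x^k - γ g^k. -/
/-!
By Jensen, `‖ē^{k+1}‖² ≤ (Nγ²)⁻¹ ∑ ‖e_n‖²`, and the compressor bounds `E‖e_n‖²` by
`ωγ² E‖∇f_n(x^{k+1}) - g^k‖²`. Expanding the square, the client average of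
`‖∇f_n(x^{k+1}) - g^k‖²` is the average of `‖∇f_n(x^{k+1})‖²` (at most `B²‖∇f(x^{k+1})‖²`)
minus `2⟪∇f(x^{k+1}), g^k⟫` plus `‖g^k‖²`. Splitting
`∇f(x^{k+1}) = ∇f(x^k) + (∇f(x^{k+1}) - ∇f(x^k))`, the first part completes the square to
`‖∇f(x^k) - g^k‖² - ‖∇f(x^k)‖² = ‖ē^k‖² - ‖∇f(x^k)‖²`, and the second costs at most `2γL‖g^k‖²`
by Cauchy–Schwarz and `L`-smoothness, since `x^{k+1} - x^k = -γ g^k`.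
-/

open MeasureTheory

open Finset in
theorem norm_sum_sq_le_card_mul_sum_norm_sq {E ι : Type*} [SeminormedAddCommGroup E]
    (s : Finset ι) (v : ι → E) : ‖∑ i ∈ s, v i‖ ^ 2 ≤ #s * ∑ i ∈ s, ‖v i‖ ^ 2 :=
  calc ‖∑ i ∈ s, v i‖ ^ 2 ≤ (∑ i ∈ s, ‖v i‖) ^ 2 := by gcongr; exact norm_sum_le s v
    _ ≤ #s * ∑ i ∈ s, ‖v i‖ ^ 2 := sq_sum_le_card_mul_sum_sq

section InnerProduct

open Finset

variable {E ι : Type*} [NormedAddCommGroup E] [InnerProductSpace ℝ E]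

theorem sum_norm_sub_sq_eq (s : Finset ι) (v : ι → E) (g : E) :
    ∑ i ∈ s, ‖v i - g‖ ^ 2 = ∑ i ∈ s, ‖v i‖ ^ 2 - 2 * inner ℝ (∑ i ∈ s, v i) g + #s * ‖g‖ ^ 2 := by
  simp only [norm_sub_sq_real, sum_add_distrib, sum_sub_distrib, ← mul_sum, sum_inner,
    sum_const, nsmul_eq_mul]

theorem norm_sq_sub_two_inner_le (a b g : E) :
    ‖g‖ ^ 2 - 2 * inner ℝ a g ≤ ‖b - g‖ ^ 2 - ‖b‖ ^ 2 + 2 * (‖a - b‖ * ‖g‖) := by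
  have hcross : -(‖a - b‖ * ‖g‖) ≤ inner ℝ (a - b) g :=
    neg_le_of_abs_le (abs_real_inner_le_norm _ _)
  rw [inner_sub_left] at hcross
  rw [norm_sub_sq_real]
  linarith

theorem sum_norm_sub_sq_le_of_sum_eq (s : Finset ι) (v : ι → E) (a b g : E) (B2 : ℝ)
    (hsum : ∑ i ∈ s, v i = (#s : ℝ) • a) (hdiss : ∑ i ∈ s, ‖v i‖ ^ 2 ≤ #s * (B2 * ‖a‖ ^ 2)) :
    ∑ i ∈ s, ‖v i - g‖ ^ 2
      ≤ #s * (B2 * ‖a‖ ^ 2 - ‖b‖ ^ 2 + 2 * (‖a - b‖ * ‖g‖) + ‖b - g‖ ^ 2) := by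
  have hcard : (0 : ℝ) ≤ #s := Nat.cast_nonneg _
  have key := mul_le_mul_of_nonneg_left (norm_sq_sub_two_inner_le a b g) hcard
  rw [sum_norm_sub_sq_eq, hsum, real_inner_smul_left]
  nlinarith

theorem sum_norm_sub_sq_le_of_gradient_step [Fintype ι] [Nonempty ι] {gn : ι → E → E} {gf : E → E}
    {L γ B2 : ℝ} (hγ : 0 < γ) (hgf : ∀ y, gf y = (Fintype.card ι : ℝ)⁻¹ • ∑ i, gn i y)
    (hlip : ∀ y z, ‖gf y - gf z‖ ≤ L * ‖y - z‖)
    (hdiss : ∀ y, (Fintype.card ι : ℝ)⁻¹ * ∑ i, ‖gn i y‖ ^ 2 ≤ B2 * ‖gf y‖ ^ 2)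
    {x x' g e : E} (hg : g = gf x - e) (hx' : x' = x - γ • g) :
    ∑ i, ‖gn i x' - g‖ ^ 2
      ≤ Fintype.card ι * (B2 * ‖gf x'‖ ^ 2 - ‖gf x‖ ^ 2 + 2 * γ * L * ‖g‖ ^ 2 + ‖e‖ ^ 2) := by
  have hcard : (0 : ℝ) < Fintype.card ι := Nat.cast_pos.mpr Fintype.card_pos
  have hmean : ∑ i, gn i x' = (Fintype.card ι : ℝ) • gf x' := by
    rw [hgf, smul_smul, mul_inv_cancel₀ hcard.ne', one_smul]
  have hdiss' : ∑ i, ‖gn i x'‖ ^ 2 ≤ Fintype.card ι * (B2 * ‖gf x'‖ ^ 2) := by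
    rw [← inv_mul_le_iff₀ hcard]; exact hdiss x'
  have hstep : ‖gf x' - gf x‖ ≤ γ * L * ‖g‖ := by
    simpa [hx', norm_smul, abs_of_pos hγ, mul_assoc, mul_left_comm] using hlip x' x
  have key := sum_norm_sub_sq_le_of_sum_eq univ (fun i => gn i x') (gf x') (gf x) g B2
    hmean hdiss'
  rw [hg, sub_sub_cancel, ← hg] at key
  refine key.trans (mul_le_mul_of_nonneg_left ?_ hcard.le)
  nlinarith [mul_le_mul_of_nonneg_right hstep (norm_nonneg g)]

end InnerProduct

section Integrals

open Finset

variable {Ω ι : Type*} [MeasurableSpace Ω] {μ : Measure Ω}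

/-- Non-integrable `f i` have integral `0`, so only `G` needs to be integrable. -/
theorem sum_integral_le_integral_of_sum_le (s : Finset ι) {f : ι → Ω → ℝ} {G : Ω → ℝ}
    (hf : ∀ i ∈ s, ∀ x, 0 ≤ f i x) (hG : Integrable G μ) (hle : ∀ x, ∑ i ∈ s, f i x ≤ G x) :
    ∑ i ∈ s, ∫ x, f i x ∂μ ≤ ∫ x, G x ∂μ := by
  classical
  set T := s.filter (fun i => Integrable (f i) μ)
  have hTs : T ⊆ s := filter_subset _ _
  have hT : ∀ i ∈ T, Integrable (f i) μ := fun i hi => (mem_filter.1 hi).2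
  have hdrop : ∑ i ∈ s, ∫ x, f i x ∂μ = ∑ i ∈ T, ∫ x, f i x ∂μ :=
    (sum_subset hTs fun i hs hT => integral_undef fun hi => hT (mem_filter.2 ⟨hs, hi⟩)).symm
  rw [hdrop, ← integral_finsetSum T hT]
  refine integral_mono (integrable_finsetSum T hT) hG fun x => ?_
  exact (sum_le_sum_of_subset_of_nonneg hTs fun i hi _ => hf i hi x).trans (hle x)

theorem integral_norm_smul_sum_sq_le {E : Type*} [SeminormedAddCommGroup E] [NormedSpace ℝ E]
    (s : Finset ι) (c : ℝ) {f : ι → Ω → E} (hf : ∀ i ∈ s, Integrable (fun x => ‖f i x‖ ^ 2) μ) :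
    ∫ x, ‖c • ∑ i ∈ s, f i x‖ ^ 2 ∂μ ≤ c ^ 2 * (#s * ∑ i ∈ s, ∫ x, ‖f i x‖ ^ 2 ∂μ) := by
  rw [← integral_finsetSum s hf, ← integral_const_mul, ← integral_const_mul]
  refine integral_mono_of_nonneg (.of_forall fun x => by positivity)
    (((integrable_finsetSum s hf).const_mul _).const_mul _) (.of_forall fun x => ?_)
  simp only [norm_smul, mul_pow, Real.norm_eq_abs, sq_abs]
  exact mul_le_mul_of_nonneg_left (norm_sum_sq_le_card_mul_sum_norm_sq s _) (sq_nonneg c)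

theorem integral_norm_smul_sub_smul_sq {E : Type*} [SeminormedAddCommGroup E] [NormedSpace ℝ E]
    (c : ℝ) (u w : Ω → E) :
    ∫ x, ‖c • u x - c • w x‖ ^ 2 ∂μ = c ^ 2 * ∫ x, ‖u x - w x‖ ^ 2 ∂μ := by
  simp only [← smul_sub, norm_smul, mul_pow, Real.norm_eq_abs, sq_abs, integral_const_mul]

end Integrals

theorem sum_integral_norm_sub_sq_le_of_gradient_step {Ω E ι : Type*} [MeasurableSpace Ω]
    {μ : Measure Ω} [NormedAddCommGroup E] [InnerProductSpace ℝ E] [Fintype ι] [Nonempty ι]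
    {gn : ι → E → E} {gf : E → E} {L γ B2 : ℝ} (hγ : 0 < γ)
    (hgf : ∀ y, gf y = (Fintype.card ι : ℝ)⁻¹ • ∑ i, gn i y)
    (hlip : ∀ y z, ‖gf y - gf z‖ ≤ L * ‖y - z‖)
    (hdiss : ∀ y, (Fintype.card ι : ℝ)⁻¹ * ∑ i, ‖gn i y‖ ^ 2 ≤ B2 * ‖gf y‖ ^ 2)
    {x x' g e : Ω → E} (hg : ∀ ω, g ω = gf (x ω) - e ω) (hx' : ∀ ω, x' ω = x ω - γ • g ω)
    (hint : Integrable (fun ω => B2 * ‖gf (x' ω)‖ ^ 2 - ‖gf (x ω)‖ ^ 2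
      + 2 * γ * L * ‖g ω‖ ^ 2 + ‖e ω‖ ^ 2) μ) :
    ∑ i, ∫ ω, ‖gn i (x' ω) - g ω‖ ^ 2 ∂μ ≤ Fintype.card ι * ∫ ω, (B2 * ‖gf (x' ω)‖ ^ 2
      - ‖gf (x ω)‖ ^ 2 + 2 * γ * L * ‖g ω‖ ^ 2 + ‖e ω‖ ^ 2) ∂μ := by
  rw [← integral_const_mul]
  exact sum_integral_le_integral_of_sum_le Finset.univ (fun _ _ _ => by positivity)
    (hint.const_mul _) fun ω => sum_norm_sub_sq_le_of_gradient_step hγ hgf hlip hdiss (hg ω) (hx' ω)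

theorem cafe_error_recursion_general (d N : ℕ) (hN : 0 < N)
    {Ω : Type*} [MeasurableSpace Ω] (μ : Measure Ω) [IsProbabilityMeasure μ]
    (gn : Fin N → EuclideanSpace ℝ (Fin d) → EuclideanSpace ℝ (Fin d))
    (gf : EuclideanSpace ℝ (Fin d) → EuclideanSpace ℝ (Fin d))
    (L γ B2 ω : ℝ) (hγ : 0 < γ) (hω0 : 0 < ω)
    (hgf : ∀ y, gf y = (N : ℝ)⁻¹ • ∑ n : Fin N, gn n y)
    (hlip : ∀ y z, ‖gf y - gf z‖ ≤ L * ‖y - z‖)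
    (hdiss : ∀ y, (N : ℝ)⁻¹ * ∑ n : Fin N, ‖gn n y‖ ^ 2 ≤ B2 * ‖gf y‖ ^ 2)
    (xk ebark gk xk1 : Ω → EuclideanSpace ℝ (Fin d))
    (hgk : ∀ ω', gk ω' = gf (xk ω') - ebark ω')
    (hxk1 : ∀ ω', xk1 ω' = xk ω' - γ • gk ω')
    (en : Fin N → Ω → EuclideanSpace ℝ (Fin d))
    (herr : ∀ n, ∫ ω', ‖en n ω'‖ ^ 2 ∂μ
      ≤ ω * ∫ ω', ‖(-γ • gn n (xk1 ω')) - (-γ • gk ω')‖ ^ 2 ∂μ)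
    (hinte : ∀ n, Integrable (fun ω' => ‖en n ω'‖ ^ 2) μ)
    (hintg0 : Integrable (fun ω' => ‖gf (xk ω')‖ ^ 2) μ)
    (hintg1 : Integrable (fun ω' => ‖gf (xk1 ω')‖ ^ 2) μ)
    (hintgk : Integrable (fun ω' => ‖gk ω'‖ ^ 2) μ)
    (hintebk : Integrable (fun ω' => ‖ebark ω'‖ ^ 2) μ)
    (ebark1 : Ω → EuclideanSpace ℝ (Fin d))
    (hebark1 : ∀ ω', ebark1 ω' = (N : ℝ)⁻¹ • ∑ n : Fin N, γ⁻¹ • en n ω') :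
    ∫ ω', ‖ebark1 ω'‖ ^ 2 ∂μ
      ≤ ω * ∫ ω', (B2 * ‖gf (xk1 ω')‖ ^ 2 - ‖gf (xk ω')‖ ^ 2) ∂μ
        + 2 * γ * ω * L * ∫ ω', ‖gk ω'‖ ^ 2 ∂μ
        + ω * ∫ ω', ‖ebark ω'‖ ^ 2 ∂μ := by
  have : Nonempty (Fin N) := Fin.pos_iff_nonempty.mp hN
  have hint1 : Integrable (fun ω' => B2 * ‖gf (xk1 ω')‖ ^ 2 - ‖gf (xk ω')‖ ^ 2) μ :=
    (hintg1.const_mul B2).sub hintg0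
  have hint2 : Integrable (fun ω' => 2 * γ * L * ‖gk ω'‖ ^ 2) μ := hintgk.const_mul _
  set H : Ω → ℝ := fun ω' => (B2 * ‖gf (xk1 ω')‖ ^ 2 - ‖gf (xk ω')‖ ^ 2)
    + 2 * γ * L * ‖gk ω'‖ ^ 2 + ‖ebark ω'‖ ^ 2
  have hdrift : ∑ n, ∫ ω', ‖gn n (xk1 ω') - gk ω'‖ ^ 2 ∂μ ≤ N * ∫ ω', H ω' ∂μ := by
    simpa using sum_integral_norm_sub_sq_le_of_gradient_step (gn := gn) (B2 := B2) hγ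
      (by simpa using hgf) hlip (by simpa using hdiss) hgk hxk1 ((hint1.add hint2).add hintebk)
  have hcomp n : ∫ ω', ‖en n ω'‖ ^ 2 ∂μ
      ≤ ω * γ ^ 2 * ∫ ω', ‖gn n (xk1 ω') - gk ω'‖ ^ 2 ∂μ := by
    simpa only [integral_norm_smul_sub_smul_sq, neg_sq, mul_assoc] using herr n
  have havg ω' : ebark1 ω' = ((N : ℝ) * γ)⁻¹ • ∑ n, en n ω' := by
    rw [hebark1, ← Finset.smul_sum, smul_smul, mul_inv]
  calc ∫ ω', ‖ebark1 ω'‖ ^ 2 ∂μ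
      ≤ ((N : ℝ) * γ)⁻¹ ^ 2 * (N * ∑ n, ∫ ω', ‖en n ω'‖ ^ 2 ∂μ) := by
        simpa only [havg, Finset.card_fin] using
          integral_norm_smul_sum_sq_le Finset.univ _ fun n _ => hinte n
    _ ≤ ((N : ℝ) * γ)⁻¹ ^ 2 * (N * (ω * γ ^ 2 * (N * ∫ ω', H ω' ∂μ))) := by
        grw [Finset.sum_le_sum fun n _ => hcomp n, ← Finset.mul_sum, hdrift]
    _ = ω * ∫ ω', H ω' ∂μ := by field_simp
    _ = _ := by
        simp only [H]
        rw [integral_add ?_ hintebk, integral_add hint1 hint2, integral_const_mul]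
        · ring
        · exact hint1.add hint2

/-- CAFe error recursion: under `L`-smoothness and bounded dissimilarity `B²`,
the CAFe rescaled average error satisfies
`E‖ē^{k+1}‖² ≤ ω E[B²‖∇f(x^{k+1})‖² - ‖∇f(x^k)‖²] + 2γωL E‖g^k‖² + ω E‖ē^k‖²`,
where `g^k = ∇f(x^k) - ē^k` and `x^{k+1} = x^k - γ g^k`, and each client
compresses `Δ_n^{k+1} - Δ_s^k` with an `ω`-compressor. -/
theorem cafe_error_recursion (d N : ℕ) (hN : 0 < N)
    {Ω : Type*} [MeasurableSpace Ω] (μ : Measure Ω) [IsProbabilityMeasure μ]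
    (gn : Fin N → EuclideanSpace ℝ (Fin d) → EuclideanSpace ℝ (Fin d))
    (gf : EuclideanSpace ℝ (Fin d) → EuclideanSpace ℝ (Fin d))
    (L γ B2 ω : ℝ) (hL : 0 < L) (hγ : 0 < γ) (hω0 : 0 < ω) (hω1 : ω < 1) (hB2 : 1 ≤ B2)
    (hgf : ∀ y, gf y = (N : ℝ)⁻¹ • ∑ n : Fin N, gn n y)
    (hlip : ∀ y z, ‖gf y - gf z‖ ≤ L * ‖y - z‖)
    (hdiss : ∀ y, (N : ℝ)⁻¹ * ∑ n : Fin N, ‖gn n y‖ ^ 2 ≤ B2 * ‖gf y‖ ^ 2)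
    (xk ebark gk xk1 : Ω → EuclideanSpace ℝ (Fin d))
    (hgk : ∀ ω', gk ω' = gf (xk ω') - ebark ω')
    (hxk1 : ∀ ω', xk1 ω' = xk ω' - γ • gk ω')
    (en : Fin N → Ω → EuclideanSpace ℝ (Fin d))
    (herr : ∀ n, ∫ ω', ‖en n ω'‖ ^ 2 ∂μ
      ≤ ω * ∫ ω', ‖(-γ • gn n (xk1 ω')) - (-γ • gk ω')‖ ^ 2 ∂μ)
    (hinte : ∀ n, Integrable (fun ω' => ‖en n ω'‖ ^ 2) μ)
    (hmease : ∀ n, AEStronglyMeasurable (en n) μ)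
    (hintg0 : Integrable (fun ω' => ‖gf (xk ω')‖ ^ 2) μ)
    (hintg1 : Integrable (fun ω' => ‖gf (xk1 ω')‖ ^ 2) μ)
    (hintgk : Integrable (fun ω' => ‖gk ω'‖ ^ 2) μ)
    (hintebk : Integrable (fun ω' => ‖ebark ω'‖ ^ 2) μ)
    (ebark1 : Ω → EuclideanSpace ℝ (Fin d))
    (hebark1 : ∀ ω', ebark1 ω' = (N : ℝ)⁻¹ • ∑ n : Fin N, γ⁻¹ • en n ω') :
    ∫ ω', ‖ebark1 ω'‖ ^ 2 ∂μ
      ≤ ω * ∫ ω', (B2 * ‖gf (xk1 ω')‖ ^ 2 - ‖gf (xk ω')‖ ^ 2) ∂μ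
        + 2 * γ * ω * L * ∫ ω', ‖gk ω'‖ ^ 2 ∂μ
        + ω * ∫ ω', ‖ebark ω'‖ ^ 2 ∂μ :=
  cafe_error_recursion_general d N hN μ gn gf L γ B2 ω hγ hω0 hgf hlip hdiss xk ebark gk xk1 hgk
    hxk1 en herr hinte hintg0 hintg1 hintgk hintebk ebark1 hebark1
end

section
/- CAFe Lyapunov decrease: define Ψ^k = E[f(x^k) + γ/(2(1-ω)) ||ē^k||²]. Under L-smoothness, bounded dissimilarity with ωB² < 1, the CAFe error recursion, and γ ≤ (1-ω)/(L(1+ω)), one has Ψ^{k+1} ≤ Ψ^k - γ/(2(1-ω)) E||∇f(x^k)||² + γωB²/(2(1-ω)) E||∇f(x^{k+1})||². -/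
/-!
The Lyapunov weight `γ / (2(1-ω))` on `E‖ē‖²` is chosen so that the `ω E‖ē^k‖²` term of the
error recursion, added to the `γ/2 E‖ē^k‖²` of the descent inequality, reproduces exactly the
weighted error at step `k`. The only term left over is the step term `2γωL E‖g^k‖²` of the
recursion; since `‖x^{k+1} - x^k‖² = γ²‖g^k‖²`, the step-size condition, in the form
`γL(1+ω) ≤ 1-ω`, makes it dominated by the negative step term of the descent inequality.
-/

open MeasureTheory

theorem norm_sub_smul_sub_self_sq {E : Type*} [SeminormedAddCommGroup E] [NormedSpace ℝ E]
    (x v : E) {γ : ℝ} (hγ : 0 ≤ γ) : ‖x - γ • v - x‖ ^ 2 = γ ^ 2 * ‖v‖ ^ 2 := by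
  rw [sub_sub_cancel_left, norm_neg, norm_smul, Real.norm_of_nonneg hγ, mul_pow]

theorem step_coeff_le_of_le_div {L γ ω : ℝ} (hL : 0 < L) (hγ : 0 < γ) (hω0 : 0 < ω)
    (hω1 : ω < 1) (hγL : γ ≤ (1 - ω) / (L * (1 + ω))) :
    2 * γ * ω * L * (γ / (2 * (1 - ω))) ≤ (1 / (2 * γ) - L / 2) * γ ^ 2 := by
  have hstep : γ * (L * (1 + ω)) ≤ 1 - ω := (le_div_iff₀ (by positivity)).mp hγL
  rw [← sub_nonneg]
  have hexpand : (1 / (2 * γ) - L / 2) * γ ^ 2 - 2 * γ * ω * L * (γ / (2 * (1 - ω)))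
      = γ / (2 * (1 - ω)) * (1 - ω - γ * (L * (1 + ω))) := by
    field_simp [(sub_pos.mpr hω1).ne']
    ring
  rw [hexpand]
  exact mul_nonneg (by have := sub_pos.mpr hω1; positivity) (sub_nonneg.mpr hstep)

theorem lyapunov_decrease_of_descent_of_error_recursion
    {F₀ F₁ G₀ G₁ E₀ E₁ S L γ ω B2 : ℝ} (hL : 0 < L) (hγ : 0 < γ) (hω0 : 0 < ω)
    (hω1 : ω < 1) (hγL : γ ≤ (1 - ω) / (L * (1 + ω))) (hS : 0 ≤ S)
    (hdescent : F₁ ≤ F₀ - γ / 2 * G₀ + γ / 2 * E₀ - (1 / (2 * γ) - L / 2) * (γ ^ 2 * S))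
    (hrec : E₁ ≤ ω * (B2 * G₁ - G₀) + 2 * γ * ω * L * S + ω * E₀) :
    F₁ + γ / (2 * (1 - ω)) * E₁
      ≤ F₀ + γ / (2 * (1 - ω)) * E₀ - γ / (2 * (1 - ω)) * G₀
        + γ * ω * B2 / (2 * (1 - ω)) * G₁ := by
  have hcoeff := step_coeff_le_of_le_div hL hγ hω0 hω1 hγL
  set c := γ / (2 * (1 - ω)) with hc
  have hc_pos : 0 < c := by have := sub_pos.mpr hω1; positivity
  have hweight : γ / 2 + c * ω = c := by
    rw [hc]
    field_simp [(sub_pos.mpr hω1).ne']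
    ring
  have hB : γ * ω * B2 / (2 * (1 - ω)) = c * ω * B2 := by rw [hc]; ring
  rw [hB]
  linear_combination hdescent + mul_le_mul_of_nonneg_left hrec hc_pos.le
    + mul_le_mul_of_nonneg_right hcoeff hS + (E₀ - G₀) * hweight

theorem cafe_lyapunov_decrease_general (d : ℕ)
    {Ω : Type*} [MeasurableSpace Ω] (μ : Measure Ω)
    (f : EuclideanSpace ℝ (Fin d) → ℝ)
    (gf : EuclideanSpace ℝ (Fin d) → EuclideanSpace ℝ (Fin d))
    (L γ B2 ω : ℝ) (k : ℕ)
    (hL : 0 < L) (hγ : 0 < γ) (hω0 : 0 < ω) (hω1 : ω < 1)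
    (hγL : γ ≤ (1 - ω) / (L * (1 + ω)))
    (x ebar : ℕ → Ω → EuclideanSpace ℝ (Fin d))
    (hstep : ∀ j ω', x (j + 1) ω' = x j ω' - γ • (gf (x j ω') - ebar j ω'))
    (hdescent : ∫ ω', f (x (k + 1) ω') ∂μ
      ≤ ∫ ω', f (x k ω') ∂μ - γ / 2 * ∫ ω', ‖gf (x k ω')‖ ^ 2 ∂μ
        + γ / 2 * ∫ ω', ‖ebar k ω'‖ ^ 2 ∂μ
        - (1 / (2 * γ) - L / 2) * ∫ ω', ‖x (k + 1) ω' - x k ω'‖ ^ 2 ∂μ)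
    (hrec : ∫ ω', ‖ebar (k + 1) ω'‖ ^ 2 ∂μ
      ≤ ω * ∫ ω', (B2 * ‖gf (x (k + 1) ω')‖ ^ 2 - ‖gf (x k ω')‖ ^ 2) ∂μ
        + 2 * γ * ω * L * ∫ ω', ‖gf (x k ω') - ebar k ω'‖ ^ 2 ∂μ
        + ω * ∫ ω', ‖ebar k ω'‖ ^ 2 ∂μ)
    (hintg : ∀ j, Integrable (fun ω' => ‖gf (x j ω')‖ ^ 2) μ) :
    (∫ ω', f (x (k + 1) ω') ∂μ) + γ / (2 * (1 - ω)) * ∫ ω', ‖ebar (k + 1) ω'‖ ^ 2 ∂μ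
      ≤ (∫ ω', f (x k ω') ∂μ) + γ / (2 * (1 - ω)) * ∫ ω', ‖ebar k ω'‖ ^ 2 ∂μ
        - γ / (2 * (1 - ω)) * ∫ ω', ‖gf (x k ω')‖ ^ 2 ∂μ
        + γ * ω * B2 / (2 * (1 - ω)) * ∫ ω', ‖gf (x (k + 1) ω')‖ ^ 2 ∂μ := by
  have hdisplacement : ∫ ω', ‖x (k + 1) ω' - x k ω'‖ ^ 2 ∂μ
      = γ ^ 2 * ∫ ω', ‖gf (x k ω') - ebar k ω'‖ ^ 2 ∂μ := by
    simp_rw [hstep k, norm_sub_smul_sub_self_sq _ _ hγ.le]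
    exact integral_const_mul _ _
  rw [hdisplacement] at hdescent
  rw [integral_sub ((hintg (k + 1)).const_mul B2) (hintg k), integral_const_mul] at hrec
  exact lyapunov_decrease_of_descent_of_error_recursion hL hγ hω0 hω1 hγL
    (integral_nonneg fun _ => by positivity) hdescent hrec

/-- CAFe Lyapunov decrease: with `Ψ^k = E[f(x^k)] + γ/(2(1-ω)) E‖ē^k‖²`, under the
descent inequality, the CAFe error recursion, `ωB² < 1`, and
`γ ≤ (1-ω)/(L(1+ω))`, one has
`Ψ^{k+1} ≤ Ψ^k - γ/(2(1-ω)) E‖∇f(x^k)‖² + γωB²/(2(1-ω)) E‖∇f(x^{k+1})‖²`. -/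
theorem cafe_lyapunov_decrease (d : ℕ)
    {Ω : Type*} [MeasurableSpace Ω] (μ : Measure Ω) [IsProbabilityMeasure μ]
    (f : EuclideanSpace ℝ (Fin d) → ℝ)
    (gf : EuclideanSpace ℝ (Fin d) → EuclideanSpace ℝ (Fin d))
    (L γ B2 ω : ℝ) (k : ℕ)
    (hL : 0 < L) (hγ : 0 < γ) (hω0 : 0 < ω) (hω1 : ω < 1) (hB2 : 1 ≤ B2)
    (hωB : ω * B2 < 1) (hγL : γ ≤ (1 - ω) / (L * (1 + ω)))
    (x ebar : ℕ → Ω → EuclideanSpace ℝ (Fin d))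
    (hstep : ∀ j ω', x (j + 1) ω' = x j ω' - γ • (gf (x j ω') - ebar j ω'))
    (hdescent : ∫ ω', f (x (k + 1) ω') ∂μ
      ≤ ∫ ω', f (x k ω') ∂μ - γ / 2 * ∫ ω', ‖gf (x k ω')‖ ^ 2 ∂μ
        + γ / 2 * ∫ ω', ‖ebar k ω'‖ ^ 2 ∂μ
        - (1 / (2 * γ) - L / 2) * ∫ ω', ‖x (k + 1) ω' - x k ω'‖ ^ 2 ∂μ)
    (hrec : ∫ ω', ‖ebar (k + 1) ω'‖ ^ 2 ∂μ
      ≤ ω * ∫ ω', (B2 * ‖gf (x (k + 1) ω')‖ ^ 2 - ‖gf (x k ω')‖ ^ 2) ∂μ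
        + 2 * γ * ω * L * ∫ ω', ‖gf (x k ω') - ebar k ω'‖ ^ 2 ∂μ
        + ω * ∫ ω', ‖ebar k ω'‖ ^ 2 ∂μ)
    (hintg : ∀ j, Integrable (fun ω' => ‖gf (x j ω')‖ ^ 2) μ)
    (hinte : ∀ j, Integrable (fun ω' => ‖ebar j ω'‖ ^ 2) μ) :
    (∫ ω', f (x (k + 1) ω') ∂μ) + γ / (2 * (1 - ω)) * ∫ ω', ‖ebar (k + 1) ω'‖ ^ 2 ∂μ
      ≤ (∫ ω', f (x k ω') ∂μ) + γ / (2 * (1 - ω)) * ∫ ω', ‖ebar k ω'‖ ^ 2 ∂μ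
        - γ / (2 * (1 - ω)) * ∫ ω', ‖gf (x k ω')‖ ^ 2 ∂μ
        + γ * ω * B2 / (2 * (1 - ω)) * ∫ ω', ‖gf (x (k + 1) ω')‖ ^ 2 ∂μ :=
  cafe_lyapunov_decrease_general d μ f gf L γ B2 ω k hL hγ hω0 hω1 hγL x ebar hstep hdescent hrec
    hintg
end

section
/- CAFe convergence: under L-smoothness (f bounded below by f*), bounded dissimilarity with ωB² < 1, initial error ē^0 = 0, and step size γ ≤ (1-ω)/(L(1+ω)), the CAFe iterates satisfy (1/K)∑_{k=0}^{K-1} E||∇f(x^k)||² ≤ 2(f(x^0) - f*)(1-ω)/(γK(1-ωB²)). -/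
/-!
The smoothness upper bound along one step `x⁺ = x - γ(∇f(x) - e)` gives
`f(x⁺) ≤ f(x) - γ/2‖∇f(x)‖² - γ/2(1 - Lγ)‖∇f(x) - e‖² + γ/2‖e‖²`. Adding `γ/(2(1 - ω))` times the
error recursion to the expectation of this inequality, the error terms combine into the Lyapunov
function `Ψᵏ = E[f(xᵏ)] + γ E‖ēᵏ‖² / (2(1 - ω))`, and the step size condition makes the coefficient
of `E‖∇f(xᵏ) - ēᵏ‖²` nonpositive. What is left is
`Ψᵏ⁺¹ + γ/(2(1 - ω)) G k ≤ Ψᵏ + γωB²/(2(1 - ω)) G (k + 1)` for `G k = E‖∇f(xᵏ)‖²`; it telescopes,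
`Ψ⁰ = f(x⁰)` since `ē⁰ = 0`, and the leftover last term `G K` is absorbed by `Ψᴷ - f*` through
`‖∇f(x)‖² ≤ 2L(f(x) - f*)`.
-/

open MeasureTheory

section Pointwise

variable {E : Type*} [NormedAddCommGroup E] [InnerProductSpace ℝ E] {f : E → ℝ} {g : E → E}
  {L : ℝ} {z : E}

theorem le_of_inexact_gradient_step {γ : ℝ} (hγ : 0 ≤ γ) (e : E)
    (hz : ∀ y, f y ≤ f z + inner ℝ (g z) (y - z) + L / 2 * ‖y - z‖ ^ 2) :
    f (z - γ • (g z - e)) ≤ f z - γ / 2 * ‖g z‖ ^ 2 - (γ / 2 - L * γ ^ 2 / 2) * ‖g z - e‖ ^ 2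
      + γ / 2 * ‖e‖ ^ 2 := by
  have hquad := hz (z - γ • (g z - e))
  rw [sub_sub_cancel_left, inner_neg_right, real_inner_smul_right, norm_neg, norm_smul,
    Real.norm_eq_abs, abs_of_nonneg hγ] at hquad
  have hpolar := norm_sub_sq_real (g z) (g z - e)
  rw [sub_sub_cancel] at hpolar
  nlinarith

theorem sq_norm_le_of_quadratic_upper_bound {m : ℝ} (hL : 0 < L)
    (hz : ∀ y, f y ≤ f z + inner ℝ (g z) (y - z) + L / 2 * ‖y - z‖ ^ 2) (hm : ∀ y, m ≤ f y) :
    ‖g z‖ ^ 2 ≤ 2 * L * (f z - m) := by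
  have hquad := hz (z - L⁻¹ • g z)
  rw [sub_sub_cancel_left, inner_neg_right, real_inner_smul_right, real_inner_self_eq_norm_sq,
    norm_neg, norm_smul, Real.norm_eq_abs, abs_of_pos (inv_pos.mpr hL)] at hquad
  have hquad_term : L / 2 * (L⁻¹ * ‖g z‖) ^ 2 = L⁻¹ * ‖g z‖ ^ 2 / 2 := by field_simp
  have hdecrease : ‖g z‖ ^ 2 / L ≤ 2 * (f z - m) := by
    rw [div_eq_inv_mul]
    linarith [hm (z - L⁻¹ • g z)]
  rw [div_le_iff₀ hL] at hdecrease
  linarith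

end Pointwise

theorem le_integral_of_forall_le {Ω : Type*} [MeasurableSpace Ω] {μ : Measure Ω}
    [IsProbabilityMeasure μ] {φ : Ω → ℝ} {m : ℝ} (hm : ∀ ω, m ≤ φ ω) (hφ : Integrable φ μ) :
    m ≤ ∫ ω, φ ω ∂μ := by
  simpa using integral_mono (integrable_const m) hφ hm

section Expectation

variable {E : Type*} [NormedAddCommGroup E] [InnerProductSpace ℝ E] {f : E → ℝ} {g : E → E}
  {L : ℝ} {Ω : Type*} [MeasurableSpace Ω] {μ : Measure Ω} {z e : Ω → E}

theorem integral_le_of_inexact_gradient_step {γ : ℝ} (hγ : 0 ≤ γ) {z' : Ω → E}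
    (hsmooth : ∀ x y, f y ≤ f x + inner ℝ (g x) (y - x) + L / 2 * ‖y - x‖ ^ 2)
    (hstep : ∀ ω, z' ω = z ω - γ • (g (z ω) - e ω))
    (hf : Integrable (fun ω ↦ f (z ω)) μ) (hf' : Integrable (fun ω ↦ f (z' ω)) μ)
    (hg : Integrable (fun ω ↦ ‖g (z ω)‖ ^ 2) μ) (he : Integrable (fun ω ↦ ‖e ω‖ ^ 2) μ)
    (hge : Integrable (fun ω ↦ ‖g (z ω) - e ω‖ ^ 2) μ) :
    ∫ ω, f (z' ω) ∂μ ≤ ∫ ω, f (z ω) ∂μ - γ / 2 * ∫ ω, ‖g (z ω)‖ ^ 2 ∂μ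
      - (γ / 2 - L * γ ^ 2 / 2) * ∫ ω, ‖g (z ω) - e ω‖ ^ 2 ∂μ + γ / 2 * ∫ ω, ‖e ω‖ ^ 2 ∂μ := by
  have hg' := hg.const_mul (γ / 2)
  have hge' := hge.const_mul (γ / 2 - L * γ ^ 2 / 2)
  have he' := he.const_mul (γ / 2)
  have h₁ : Integrable (fun ω ↦ f (z ω) - γ / 2 * ‖g (z ω)‖ ^ 2) μ := hf.sub hg'
  have h₂ : Integrable (fun ω ↦ f (z ω) - γ / 2 * ‖g (z ω)‖ ^ 2
      - (γ / 2 - L * γ ^ 2 / 2) * ‖g (z ω) - e ω‖ ^ 2) μ := h₁.sub hge'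
  calc ∫ ω, f (z' ω) ∂μ
      ≤ ∫ ω, (f (z ω) - γ / 2 * ‖g (z ω)‖ ^ 2
          - (γ / 2 - L * γ ^ 2 / 2) * ‖g (z ω) - e ω‖ ^ 2 + γ / 2 * ‖e ω‖ ^ 2) ∂μ :=
        integral_mono hf' (h₂.add he') fun ω ↦ by
          simpa only [hstep] using le_of_inexact_gradient_step hγ (e ω) (hsmooth (z ω))
    _ = _ := by
        rw [integral_add h₂ he', integral_sub h₁ hge',
          integral_sub hf hg', integral_const_mul, integral_const_mul, integral_const_mul]

variable [IsProbabilityMeasure μ]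

theorem integral_sq_norm_le_of_quadratic_upper_bound {m : ℝ} (hL : 0 < L)
    (hsmooth : ∀ x y, f y ≤ f x + inner ℝ (g x) (y - x) + L / 2 * ‖y - x‖ ^ 2)
    (hm : ∀ y, m ≤ f y) (hf : Integrable (fun ω ↦ f (z ω)) μ)
    (hg : Integrable (fun ω ↦ ‖g (z ω)‖ ^ 2) μ) :
    ∫ ω, ‖g (z ω)‖ ^ 2 ∂μ ≤ 2 * L * (∫ ω, f (z ω) ∂μ - m) := by
  calc ∫ ω, ‖g (z ω)‖ ^ 2 ∂μ ≤ ∫ ω, 2 * L * (f (z ω) - m) ∂μ :=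
        integral_mono hg ((hf.sub (integrable_const m)).const_mul (2 * L)) fun ω ↦
          sq_norm_le_of_quadratic_upper_bound hL (hsmooth (z ω)) hm
    _ = 2 * L * (∫ ω, f (z ω) ∂μ - m) := by
        rw [integral_const_mul, integral_sub hf (integrable_const m), integral_const, smul_eq_mul,
          probReal_univ, one_mul]

end Expectation

theorem mul_sum_range_le_of_succ_le {a G : ℕ → ℝ} {c q : ℝ}
    (h : ∀ k, a (k + 1) + c * G k ≤ a k + c * q * G (k + 1)) (K : ℕ) :
    c * (1 - q) * ∑ k ∈ Finset.range K, G k ≤ a 0 - a K + c * q * (G K - G 0) := by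
  induction K with
  | zero => simp
  | succ K ih =>
    rw [Finset.sum_range_succ]
    linarith [h K]

section Lyapunov

variable {L γ ω B2 : ℝ} {F G E D : ℕ → ℝ}

-- The bracketed sums are `2(1 - ω) Ψᵏ`.
theorem lyapunov_succ_le (hγ : 0 ≤ γ) (hω : ω ≤ 1) (hγL : γ * L * (1 + ω) ≤ 1 - ω) (k : ℕ)
    (hD : 0 ≤ D k)
    (hF : F (k + 1) ≤ F k - γ / 2 * G k - (γ / 2 - L * γ ^ 2 / 2) * D k + γ / 2 * E k)
    (hE : E (k + 1) ≤ ω * (B2 * G (k + 1) - G k) + 2 * γ * ω * L * D k + ω * E k) :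
    (2 * (1 - ω) * F (k + 1) + γ * E (k + 1)) + γ * G k
      ≤ (2 * (1 - ω) * F k + γ * E k) + γ * (ω * B2) * G (k + 1) := by
  have hD_coeff : γ * (γ * L * (1 + ω) - (1 - ω)) * D k ≤ 0 :=
    mul_nonpos_of_nonpos_of_nonneg (mul_nonpos_of_nonneg_of_nonpos hγ (by linarith)) hD
  linear_combination (2 * (1 - ω)) * hF + γ * hE + hD_coeff

theorem mul_sum_range_le_of_lyapunov {fstar : ℝ} (hγ : 0 ≤ γ) (hL : 0 ≤ L) (hω : 0 ≤ ω)
    (hω1 : ω ≤ 1) (hB2 : 0 ≤ B2) (hωB : ω * B2 ≤ 1) (hγL : γ * L * (1 + ω) ≤ 1 - ω) (K : ℕ)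
    (hF : ∀ k, F (k + 1) ≤ F k - γ / 2 * G k - (γ / 2 - L * γ ^ 2 / 2) * D k + γ / 2 * E k)
    (hE : ∀ k, E (k + 1) ≤ ω * (B2 * G (k + 1) - G k) + 2 * γ * ω * L * D k + ω * E k)
    (hE0 : E 0 = 0) (hEK : 0 ≤ E K) (hD : ∀ k, 0 ≤ D k) (hG0 : 0 ≤ G 0)
    (hFK : fstar ≤ F K) (hGK : G K ≤ 2 * L * (F K - fstar)) :
    γ * (1 - ω * B2) * ∑ k ∈ Finset.range K, G k ≤ 2 * (1 - ω) * (F 0 - fstar) := by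
  have hsum := mul_sum_range_le_of_succ_le (a := fun k ↦ 2 * (1 - ω) * F k + γ * E k)
    (fun k ↦ lyapunov_succ_le hγ hω1 hγL k (hD k) (hF k) (hE k)) K
  have hq : 0 ≤ ω * B2 := mul_nonneg hω hB2
  have hγLq : γ * L * (ω * B2) ≤ 1 - ω := by nlinarith [mul_nonneg hγ hL]
  have hlast : γ * (ω * B2) * G K ≤ 2 * (1 - ω) * (F K - fstar) := by
    nlinarith [mul_le_mul_of_nonneg_left hGK (mul_nonneg hγ hq),
      mul_le_mul_of_nonneg_right hγLq (sub_nonneg.mpr hFK)]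
  rw [hE0] at hsum
  nlinarith [mul_nonneg hγ hEK, mul_nonneg (mul_nonneg hγ hq) hG0]

end Lyapunov

theorem cafe_convergence_general (d : ℕ)
    {Ω : Type*} [MeasurableSpace Ω] (μ : Measure Ω) [IsProbabilityMeasure μ]
    (f : EuclideanSpace ℝ (Fin d) → ℝ)
    (gf : EuclideanSpace ℝ (Fin d) → EuclideanSpace ℝ (Fin d))
    (L γ fstar B2 ω : ℝ) (K : ℕ)
    (hL : 0 < L) (hγ : 0 < γ) (hγL : γ ≤ (1 - ω) / (L * (1 + ω)))
    (hω0 : 0 < ω) (hω1 : ω < 1) (hB2 : 1 ≤ B2) (hωB : ω * B2 < 1)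
    (hsmooth : ∀ x y, f y ≤ f x + (inner ℝ (gf x) (y - x) : ℝ) + L / 2 * ‖y - x‖ ^ 2)
    (hlb : ∀ x, fstar ≤ f x)
    (x ebar : ℕ → Ω → EuclideanSpace ℝ (Fin d))
    (x0 : EuclideanSpace ℝ (Fin d)) (hx0 : ∀ ω', x 0 ω' = x0)
    (hebar0 : ∀ ω', ebar 0 ω' = 0)
    (hstep : ∀ k ω', x (k + 1) ω' = x k ω' - γ • (gf (x k ω') - ebar k ω'))
    (hintf : ∀ k, Integrable (fun ω' => f (x k ω')) μ)
    (hintg : ∀ k, Integrable (fun ω' => ‖gf (x k ω')‖ ^ 2) μ)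
    (hinte : ∀ k, Integrable (fun ω' => ‖ebar k ω'‖ ^ 2) μ)
    (hintgk : ∀ k, Integrable (fun ω' => ‖gf (x k ω') - ebar k ω'‖ ^ 2) μ)
    (hrec : ∀ k, ∫ ω', ‖ebar (k + 1) ω'‖ ^ 2 ∂μ
      ≤ ω * ∫ ω', (B2 * ‖gf (x (k + 1) ω')‖ ^ 2 - ‖gf (x k ω')‖ ^ 2) ∂μ
        + 2 * γ * ω * L * ∫ ω', ‖gf (x k ω') - ebar k ω'‖ ^ 2 ∂μ
        + ω * ∫ ω', ‖ebar k ω'‖ ^ 2 ∂μ) :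
    (1 / (K : ℝ)) * ∑ k ∈ Finset.range K, ∫ ω', ‖gf (x k ω')‖ ^ 2 ∂μ
      ≤ 2 * (f x0 - fstar) * (1 - ω) / (γ * K * (1 - ω * B2)) := by
  have hγL' : γ * L * (1 + ω) ≤ 1 - ω := by
    rwa [le_div_iff₀ (by positivity), ← mul_assoc] at hγL
  have hsum := mul_sum_range_le_of_lyapunov (F := fun k ↦ ∫ ω', f (x k ω') ∂μ)
    (G := fun k ↦ ∫ ω', ‖gf (x k ω')‖ ^ 2 ∂μ) (E := fun k ↦ ∫ ω', ‖ebar k ω'‖ ^ 2 ∂μ)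
    (D := fun k ↦ ∫ ω', ‖gf (x k ω') - ebar k ω'‖ ^ 2 ∂μ)
    hγ.le hL.le hω0.le hω1.le (by linarith) hωB.le hγL' K
    (fun k ↦ integral_le_of_inexact_gradient_step hγ.le hsmooth (hstep k) (hintf k)
      (hintf (k + 1)) (hintg k) (hinte k) (hintgk k))
    (fun k ↦ by
      simpa only [integral_sub ((hintg (k + 1)).const_mul B2) (hintg k), integral_const_mul]
        using hrec k)
    (by simp [hebar0]) (integral_nonneg fun _ ↦ by positivity)
    (fun _ ↦ integral_nonneg fun _ ↦ by positivity) (integral_nonneg fun _ ↦ by positivity)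
    (le_integral_of_forall_le (fun _ ↦ hlb _) (hintf K))
    (integral_sq_norm_le_of_quadratic_upper_bound hL hsmooth hlb (hintf K) (hintg K))
  simp only [hx0, integral_const, probReal_univ, one_smul] at hsum
  calc (1 / (K : ℝ)) * ∑ k ∈ Finset.range K, ∫ ω', ‖gf (x k ω')‖ ^ 2 ∂μ
      ≤ 1 / (K : ℝ) * (2 * (1 - ω) * (f x0 - fstar) / (γ * (1 - ω * B2))) := by
        gcongr
        rwa [le_div_iff₀' (mul_pos hγ (by linarith))]
    _ = 2 * (f x0 - fstar) * (1 - ω) / (γ * K * (1 - ω * B2)) := by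
        rw [one_div_mul_eq_div, div_div]
        congr 1 <;> ring

/-- CAFe convergence: for `L`-smooth `f` bounded below by `fstar`, with
`ω ∈ (0,1)`, `B² ≥ 1`, `ωB² < 1`, initial error `ē⁰ = 0`, step size
`γ ≤ (1-ω)/(L(1+ω))`, iterates `x^{k+1} = x^k - γ(∇f(x^k) - ē^k)` and the
CAFe error recursion, one has
`(1/K)∑_{k<K} E‖∇f(x^k)‖² ≤ 2(f(x⁰) - f*)(1-ω)/(γK(1-ωB²))`. -/
theorem cafe_convergence (d : ℕ)
    {Ω : Type*} [MeasurableSpace Ω] (μ : Measure Ω) [IsProbabilityMeasure μ]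
    (f : EuclideanSpace ℝ (Fin d) → ℝ)
    (gf : EuclideanSpace ℝ (Fin d) → EuclideanSpace ℝ (Fin d))
    (L γ fstar B2 ω : ℝ) (K : ℕ) (hK : 0 < K)
    (hL : 0 < L) (hγ : 0 < γ) (hγL : γ ≤ (1 - ω) / (L * (1 + ω)))
    (hω0 : 0 < ω) (hω1 : ω < 1) (hB2 : 1 ≤ B2) (hωB : ω * B2 < 1)
    (hsmooth : ∀ x y, f y ≤ f x + (inner ℝ (gf x) (y - x) : ℝ) + L / 2 * ‖y - x‖ ^ 2)
    (hlb : ∀ x, fstar ≤ f x)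
    (x ebar : ℕ → Ω → EuclideanSpace ℝ (Fin d))
    (x0 : EuclideanSpace ℝ (Fin d)) (hx0 : ∀ ω', x 0 ω' = x0)
    (hebar0 : ∀ ω', ebar 0 ω' = 0)
    (hstep : ∀ k ω', x (k + 1) ω' = x k ω' - γ • (gf (x k ω') - ebar k ω'))
    (hintf : ∀ k, Integrable (fun ω' => f (x k ω')) μ)
    (hintg : ∀ k, Integrable (fun ω' => ‖gf (x k ω')‖ ^ 2) μ)
    (hinte : ∀ k, Integrable (fun ω' => ‖ebar k ω'‖ ^ 2) μ)
    (hintgk : ∀ k, Integrable (fun ω' => ‖gf (x k ω') - ebar k ω'‖ ^ 2) μ)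
    (hrec : ∀ k, ∫ ω', ‖ebar (k + 1) ω'‖ ^ 2 ∂μ
      ≤ ω * ∫ ω', (B2 * ‖gf (x (k + 1) ω')‖ ^ 2 - ‖gf (x k ω')‖ ^ 2) ∂μ
        + 2 * γ * ω * L * ∫ ω', ‖gf (x k ω') - ebar k ω'‖ ^ 2 ∂μ
        + ω * ∫ ω', ‖ebar k ω'‖ ^ 2 ∂μ) :
    (1 / (K : ℝ)) * ∑ k ∈ Finset.range K, ∫ ω', ‖gf (x k ω')‖ ^ 2 ∂μ
      ≤ 2 * (f x0 - fstar) * (1 - ω) / (γ * K * (1 - ω * B2)) :=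
  cafe_convergence_general d μ f gf L γ fstar B2 ω K hL hγ hγL hω0 hω1 hB2 hωB hsmooth hlb x ebar x0
    hx0 hebar0 hstep hintf hintg hinte hintgk hrec
end

section
/- CAFe-S error bound: if the server loss f_s satisfies (1/N)∑_n ||∇f_n(x) - ∇f_s(x)||² ≤ G² (1/N)∑_n ||∇f_n(x)||², and bounded dissimilarity holds with constant B², then compressing Δ_n - Δ_c with an ω-compressor yields average rescaled error E||ē||² ≤ ω G² B² E||∇f(x)||². -/
/-!
Jensen's inequality for `‖·‖²` bounds the mean-square norm of the averaged error `ē` by the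
average of the clients' mean-square errors. Each of these is at most `ω γ² ‖∇f_n - ∇f_s‖²`
by the compressor property, and the factor `γ²` cancels against the `γ⁻¹` in `ē`. What remains,
`ω · (1/N) ∑ ‖∇f_n - ∇f_s‖²`, is bounded by `ω G² B² ‖∇f‖²` through the server dissimilarity
and then the bounded dissimilarity assumption.
-/

open MeasureTheory Finset

section

variable {ι E : Type*} [SeminormedAddCommGroup E] [NormedSpace ℝ E]

theorem norm_avg_sq_le_avg_norm_sq (s : Finset ι) (v : ι → E) :
    ‖(#s : ℝ)⁻¹ • ∑ i ∈ s, v i‖ ^ 2 ≤ (#s : ℝ)⁻¹ * ∑ i ∈ s, ‖v i‖ ^ 2 := by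
  rcases s.eq_empty_or_nonempty with rfl | hs
  · simp
  have hcard : (0 : ℝ) < #s := by exact_mod_cast hs.card_pos
  calc ‖(#s : ℝ)⁻¹ • ∑ i ∈ s, v i‖ ^ 2
      = (#s : ℝ)⁻¹ ^ 2 * ‖∑ i ∈ s, v i‖ ^ 2 := by
        rw [norm_smul, mul_pow, Real.norm_eq_abs, sq_abs]
    _ ≤ (#s : ℝ)⁻¹ ^ 2 * (∑ i ∈ s, ‖v i‖) ^ 2 := by gcongr; exact norm_sum_le _ _
    _ ≤ (#s : ℝ)⁻¹ ^ 2 * (#s * ∑ i ∈ s, ‖v i‖ ^ 2) := by gcongr; exact sq_sum_le_card_mul_sum_sq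
    _ = (#s : ℝ)⁻¹ * ∑ i ∈ s, ‖v i‖ ^ 2 := by field_simp

variable {Ω : Type*} [MeasurableSpace Ω] {μ : Measure Ω}

theorem integral_norm_avg_sq_le (s : Finset ι) {f : ι → Ω → E}
    (hf : ∀ i ∈ s, Integrable (fun ω => ‖f i ω‖ ^ 2) μ) :
    ∫ ω, ‖(#s : ℝ)⁻¹ • ∑ i ∈ s, f i ω‖ ^ 2 ∂μ
      ≤ (#s : ℝ)⁻¹ * ∑ i ∈ s, ∫ ω, ‖f i ω‖ ^ 2 ∂μ := by
  rw [← integral_finsetSum s hf, ← integral_const_mul]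
  refine integral_mono_of_nonneg (ae_of_all _ fun _ => by positivity)
    ((integrable_finsetSum s hf).const_mul _) (ae_of_all _ fun ω => ?_)
  simpa only [Finset.sum_apply] using norm_avg_sq_le_avg_norm_sq s (f · ω)

theorem MeasureTheory.Integrable.norm_smul_sq {f : Ω → E}
    (hf : Integrable (fun ω => ‖f ω‖ ^ 2) μ) (c : ℝ) :
    Integrable (fun ω => ‖c • f ω‖ ^ 2) μ := by
  simpa only [norm_smul, mul_pow] using hf.const_mul (‖c‖ ^ 2)

theorem integral_norm_inv_smul_sq_le {f : Ω → E} {γ ω r : ℝ} (hγ : γ ≠ 0)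
    (h : ∫ x, ‖f x‖ ^ 2 ∂μ ≤ ω * (γ ^ 2 * r)) :
    ∫ x, ‖γ⁻¹ • f x‖ ^ 2 ∂μ ≤ ω * r := by
  simp only [norm_smul, mul_pow, Real.norm_eq_abs, sq_abs]
  rw [integral_const_mul]
  calc (γ⁻¹) ^ 2 * ∫ x, ‖f x‖ ^ 2 ∂μ ≤ (γ⁻¹) ^ 2 * (ω * (γ ^ 2 * r)) := by gcongr
    _ = ω * r := by field_simp

end

theorem cafe_s_error_bound_general (d N : ℕ)
    {Ω : Type*} [MeasurableSpace Ω] (μ : Measure Ω)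
    (gn : Fin N → EuclideanSpace ℝ (Fin d) → EuclideanSpace ℝ (Fin d))
    (gs gf : EuclideanSpace ℝ (Fin d) → EuclideanSpace ℝ (Fin d))
    (B2 G2 ω γ : ℝ) (hG2 : 0 ≤ G2)
    (hω0 : 0 < ω) (hγ : 0 < γ)
    (hdiss : ∀ y, (N : ℝ)⁻¹ * ∑ n : Fin N, ‖gn n y‖ ^ 2 ≤ B2 * ‖gf y‖ ^ 2)
    (hserver : ∀ y, (N : ℝ)⁻¹ * ∑ n : Fin N, ‖gn n y - gs y‖ ^ 2
      ≤ G2 * ((N : ℝ)⁻¹ * ∑ n : Fin N, ‖gn n y‖ ^ 2))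
    (x : EuclideanSpace ℝ (Fin d))
    (e : Fin N → Ω → EuclideanSpace ℝ (Fin d))
    (hint : ∀ n, Integrable (fun ω' => ‖e n ω'‖ ^ 2) μ)
    (herr : ∀ n, ∫ ω', ‖e n ω'‖ ^ 2 ∂μ ≤ ω * ‖(-γ • gn n x) - (-γ • gs x)‖ ^ 2)
    (ebar : Ω → EuclideanSpace ℝ (Fin d))
    (hebar : ∀ ω', ebar ω' = (N : ℝ)⁻¹ • ∑ n : Fin N, γ⁻¹ • e n ω') :
    ∫ ω', ‖ebar ω'‖ ^ 2 ∂μ ≤ ω * G2 * B2 * ‖gf x‖ ^ 2 := by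
  have hclient : ∀ n, ∫ ω', ‖γ⁻¹ • e n ω'‖ ^ 2 ∂μ ≤ ω * ‖gn n x - gs x‖ ^ 2 := fun n =>
    integral_norm_inv_smul_sq_le hγ.ne' <| by
      simpa only [← smul_sub, norm_smul, mul_pow, Real.norm_eq_abs, sq_abs, neg_sq] using herr n
  have havg := integral_norm_avg_sq_le (μ := μ) univ fun n _ => (hint n).norm_smul_sq γ⁻¹
  simp only [card_univ, Fintype.card_fin, ← hebar] at havg
  calc ∫ ω', ‖ebar ω'‖ ^ 2 ∂μ
      ≤ (N : ℝ)⁻¹ * ∑ n, ω * ‖gn n x - gs x‖ ^ 2 := havg.trans (by gcongr with n; exact hclient n)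
    _ = ω * ((N : ℝ)⁻¹ * ∑ n, ‖gn n x - gs x‖ ^ 2) := by rw [← mul_sum]; ring
    _ ≤ ω * (G2 * (B2 * ‖gf x‖ ^ 2)) := by
        gcongr ω * ?_
        exact (hserver x).trans (mul_le_mul_of_nonneg_left (hdiss x) hG2)
    _ = ω * G2 * B2 * ‖gf x‖ ^ 2 := by ring

/-- CAFe-S error bound: if the server gradient `∇f_s` satisfies
`(1/N)∑ ‖∇f_n(x) - ∇f_s(x)‖² ≤ G² (1/N)∑ ‖∇f_n(x)‖²` and bounded dissimilarity
holds with constant `B²`, then compressing `Δ_n - Δ_c` with an `ω`-compressor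
yields average rescaled error `E‖ē‖² ≤ ω G² B² ‖∇f(x)‖²`. -/
theorem cafe_s_error_bound (d N : ℕ) (hN : 0 < N)
    {Ω : Type*} [MeasurableSpace Ω] (μ : Measure Ω) [IsProbabilityMeasure μ]
    (gn : Fin N → EuclideanSpace ℝ (Fin d) → EuclideanSpace ℝ (Fin d))
    (gs gf : EuclideanSpace ℝ (Fin d) → EuclideanSpace ℝ (Fin d))
    (hgf : ∀ y, gf y = (N : ℝ)⁻¹ • ∑ n : Fin N, gn n y)
    (B2 G2 ω γ : ℝ) (hB2 : 1 ≤ B2) (hG2 : 0 ≤ G2)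
    (hω0 : 0 < ω) (hω1 : ω < 1) (hγ : 0 < γ)
    (hdiss : ∀ y, (N : ℝ)⁻¹ * ∑ n : Fin N, ‖gn n y‖ ^ 2 ≤ B2 * ‖gf y‖ ^ 2)
    (hserver : ∀ y, (N : ℝ)⁻¹ * ∑ n : Fin N, ‖gn n y - gs y‖ ^ 2
      ≤ G2 * ((N : ℝ)⁻¹ * ∑ n : Fin N, ‖gn n y‖ ^ 2))
    (x : EuclideanSpace ℝ (Fin d))
    (e : Fin N → Ω → EuclideanSpace ℝ (Fin d))
    (hmeas : ∀ n, AEStronglyMeasurable (e n) μ)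
    (hint : ∀ n, Integrable (fun ω' => ‖e n ω'‖ ^ 2) μ)
    (herr : ∀ n, ∫ ω', ‖e n ω'‖ ^ 2 ∂μ ≤ ω * ‖(-γ • gn n x) - (-γ • gs x)‖ ^ 2)
    (ebar : Ω → EuclideanSpace ℝ (Fin d))
    (hebar : ∀ ω', ebar ω' = (N : ℝ)⁻¹ • ∑ n : Fin N, γ⁻¹ • e n ω') :
    ∫ ω', ‖ebar ω'‖ ^ 2 ∂μ ≤ ω * G2 * B2 * ‖gf x‖ ^ 2 :=
  cafe_s_error_bound_general d N μ gn gs gf B2 G2 ω γ hG2 hω0 hγ hdiss hserver x e hint herr ebar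
    hebar
end
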